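/- arXiv:2201.04061 — 7 statements merged into one kernel-verified Lean document; each statement's English description precedes it below -/
import Mathlib

section
/- Let R = {x₁,x₂} and R' = {y₁,y₂} be two requests with x₁ ≤ x₂, y₁ ≤ y₂, x₁ ≤ y₁ and x₂ ≤ y₂. Then cross(R,R') ≤ cross(R',R); that is, the number of crossings between the edges of the two requests when R is assigned the smaller of the two slots is at most the number when R' is assigned the smaller slot. -/
/- Slotted OSCM-2 model.  Slots and vertices are indexed by `Fin n` with the natural
linear order.  A request is an unordered pair of two distinct vertices, stored with
`fst < snd`. -/

structure Request (n : ℕ) where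
  fst : Fin n
  snd : Fin n
  lt : fst < snd

/-- Two edges `(s,u)` and `(s',u')` cross iff `(s < s' ∧ u' < u) ∨ (s' < s ∧ u < u')`. -/
def edgesCross {n : ℕ} (s s' u u' : Fin n) : Prop :=
  (s < s' ∧ u' < u) ∨ (s' < s ∧ u < u')

instance {n : ℕ} (s s' u u' : Fin n) : Decidable (edgesCross s s' u u') := by
  unfold edgesCross; infer_instance

/-- Number of crossing pairs of edges between request `R` placed at slot `s` and
request `R'` placed at slot `s'`. -/
def pairCross {n : ℕ} (R R' : Request n) (s s' : Fin n) : ℕ :=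
  (if edgesCross s s' R.fst R'.fst then 1 else 0) +
  (if edgesCross s s' R.fst R'.snd then 1 else 0) +
  (if edgesCross s s' R.snd R'.fst then 1 else 0) +
  (if edgesCross s s' R.snd R'.snd then 1 else 0)

/-- Crossing number of an assignment `σ` for the instance `R`. -/
def cr {n : ℕ} (R : Fin n → Request n) (σ : Fin n → Fin n) : ℕ :=
  ∑ p ∈ Finset.univ.filter (fun p : Fin n × Fin n => p.1 < p.2),
    pairCross (R p.1) (R p.2) (σ p.1) (σ p.2)

/-- Minimum crossing number over all assignments (bijections). -/
noncomputable def opt {n : ℕ} (R : Fin n → Request n) : ℕ :=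
  sInf {c : ℕ | ∃ σ : Equiv.Perm (Fin n), cr R (⇑σ) = c}

/-- `crossLower R R'`: number of crossings between the edges of `R` and `R'` when
`R` gets the smaller of the two slots. -/
def crossLower {n : ℕ} (R R' : Request n) : ℕ :=
  (if R'.fst < R.fst then 1 else 0) + (if R'.snd < R.fst then 1 else 0) +
  (if R'.fst < R.snd then 1 else 0) + (if R'.snd < R.snd then 1 else 0)

/-- Pairwise minimum number of crossings between two requests. -/
def mincross {n : ℕ} (R R' : Request n) : ℕ :=
  min (crossLower R R') (crossLower R' R)

/-- The instance is 2-regular: every vertex occurs exactly twice among the requests,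
counted with multiplicity. -/
def TwoRegular {n : ℕ} (R : Fin n → Request n) : Prop :=
  ∀ v : Fin n,
    (∑ i : Fin n, ((if (R i).fst = v then 1 else 0) + (if (R i).snd = v then 1 else 0))) = 2

/-- If `R = {x₁,x₂}` and `R' = {y₁,y₂}` with `x₁ ≤ y₁` and `x₂ ≤ y₂`, then the number
of crossings when `R` gets the smaller slot is at most the number when `R'` gets
the smaller slot. -/
theorem crossLower_le_of_le {n : ℕ} (R R' : Request n)
    (h1 : R.fst ≤ R'.fst) (h2 : R.snd ≤ R'.snd) :
    crossLower R R' ≤ crossLower R' R := by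
  have hR := R.lt
  have hR' := R'.lt
  unfold crossLower
  split_ifs <;> omega
end

section
/- Let (R_1,…,R_n) be an instance with an assignment σ, and let i ≠ j be indices with R_i = {x₁,x₂} (x₁ ≤ x₂), R_j = {y₁,y₂} (y₁ ≤ y₂), x₁ ≤ y₁, x₂ ≤ y₂ and σ(j) < σ(i). Let σ' be the assignment obtained from σ by swapping the slots of R_i and R_j (σ'(i) = σ(j), σ'(j) = σ(i), σ' = σ elsewhere). Then cr(σ') ≤ cr(σ): the assignment in which R_i gets the smaller slot generates at most as many crossings in the whole graph as the swapped one. -/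
lemma pairCross_eq_left {n : ℕ} {A B : Request n} {s s' : Fin n} (h : s < s') :
    pairCross A B s s' = crossLower A B := by
  simp only [pairCross, crossLower, edgesCross, h, lt_asymm h, true_and, false_and, or_false]

lemma pairCross_eq_right {n : ℕ} {A B : Request n} {s s' : Fin n} (h : s' < s) :
    pairCross A B s s' = crossLower B A := by
  simp only [pairCross, crossLower, edgesCross, h, lt_asymm h, true_and, false_and, false_or]
  ring

lemma pairCross_comm {n : ℕ} (A B : Request n) (s s' : Fin n) :
    pairCross A B s s' = pairCross B A s' s := by
  rcases lt_trichotomy s s' with h|h|h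
  · rw [pairCross_eq_left h, pairCross_eq_right h]
  · subst h; simp [pairCross, edgesCross]
  · rw [pairCross_eq_right h, pairCross_eq_left h]

lemma crossLower_pair {n : ℕ} {A B : Request n} (h1 : A.fst ≤ B.fst) (h2 : A.snd ≤ B.snd) :
    crossLower A B ≤ crossLower B A := by
  have a := A.lt; have b := B.lt
  simp only [crossLower, Fin.lt_def, Fin.le_def] at *
  split_ifs <;> omega

lemma crossLower_mono {n : ℕ} {A B C : Request n} (h1 : A.fst ≤ B.fst) (h2 : A.snd ≤ B.snd) :
    crossLower A C ≤ crossLower B C := by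
  simp only [crossLower, Fin.lt_def, Fin.le_def] at *
  split_ifs <;> omega

lemma crossLower_anti {n : ℕ} {A B C : Request n} (h1 : A.fst ≤ B.fst) (h2 : A.snd ≤ B.snd) :
    crossLower C B ≤ crossLower C A := by
  simp only [crossLower, Fin.lt_def, Fin.le_def] at *
  split_ifs <;> omega

lemma exchange_key {n : ℕ} {Ri Rj Rk : Request n} (h1 : Ri.fst ≤ Rj.fst) (h2 : Ri.snd ≤ Rj.snd)
    {si sj sk : Fin n} (hσ : sj < si) (hki : sk ≠ si) (hkj : sk ≠ sj) :
    pairCross Ri Rk sj sk + pairCross Rj Rk si sk ≤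
      pairCross Ri Rk si sk + pairCross Rj Rk sj sk := by
  rcases lt_or_gt_of_ne hkj with h|h
  · rw [pairCross_eq_right h, pairCross_eq_right (h.trans hσ),
      pairCross_eq_right (h.trans hσ), pairCross_eq_right h]
  · rcases lt_or_gt_of_ne hki with h'|h'
    · rw [pairCross_eq_left h, pairCross_eq_right h', pairCross_eq_right h', pairCross_eq_left h]
      have hm := crossLower_mono (C := Rk) h1 h2
      have ha := crossLower_anti (C := Rk) h1 h2
      omega
    · rw [pairCross_eq_left h, pairCross_eq_left h', pairCross_eq_left h', pairCross_eq_left h]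

/-- Swapping two requests `R_i = {x₁,x₂}` and `R_j = {y₁,y₂}` with `x₁ ≤ y₁`,
`x₂ ≤ y₂` and `σ j < σ i` so that `R_i` gets the smaller slot does not increase the
total number of crossings of the whole graph. -/
theorem cr_swap_le {n : ℕ} (R : Fin n → Request n) (σ : Equiv.Perm (Fin n))
    (i j : Fin n) (hij : i ≠ j)
    (h1 : (R i).fst ≤ (R j).fst) (h2 : (R i).snd ≤ (R j).snd)
    (hσ : σ j < σ i) :
    cr R ⇑((Equiv.swap i j).trans σ) ≤ cr R ⇑σ := by
  classical
  set τ := (Equiv.swap i j).trans σ with hτdef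
  have hτi : τ i = σ j := by simp [hτdef]
  have hτj : τ j = σ i := by simp [hτdef]
  have hτk : ∀ k, k ≠ i → k ≠ j → τ k = σ k := by
    intro k hki hkj
    simp [hτdef, Equiv.swap_apply_of_ne_of_ne hki hkj]
  set w : Fin n → Fin n := ⇑(Equiv.swap i j) with hwdef
  have hwi : w i = j := Equiv.swap_apply_left i j
  have hwj : w j = i := Equiv.swap_apply_right i j
  have hwk : ∀ k, k ≠ i → k ≠ j → w k = k := fun k hki hkj =>
    Equiv.swap_apply_of_ne_of_ne hki hkj
  have hwinj : Function.Injective w := (Equiv.swap i j).injective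
  set S : Finset (Fin n × Fin n) :=
    Finset.univ.filter (fun p : Fin n × Fin n => p.1 < p.2) with hSdef
  set f : Fin n × Fin n → ℕ :=
    fun p => pairCross (R p.1) (R p.2) (τ p.1) (τ p.2) with hfdef
  set g : Fin n × Fin n → ℕ :=
    fun p => pairCross (R p.1) (R p.2) (σ p.1) (σ p.2) with hgdef
  have hcr' : cr R ⇑τ = ∑ p ∈ S, f p := rfl
  have hcr : cr R ⇑σ = ∑ p ∈ S, g p := rfl
  set ι : Fin n × Fin n → Fin n × Fin n :=
    fun p => if w p.1 < w p.2 then (w p.1, w p.2) else (w p.2, w p.1) with hιdef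
  have memS : ∀ p : Fin n × Fin n, p ∈ S ↔ p.1 < p.2 := by
    intro p; simp [hSdef]
  have hιS : ∀ p ∈ S, ι p ∈ S := by
    intro p hp
    rw [memS] at hp
    by_cases h : w p.1 < w p.2
    · simp only [hιdef, if_pos h]; rw [memS]; exact h
    · have hne : w p.2 ≠ w p.1 := fun he => (ne_of_lt hp) (hwinj he).symm
      simp only [hιdef, if_neg h]; rw [memS]
      exact lt_of_le_of_ne (not_lt.mp h) hne
  have hιι : ∀ p ∈ S, ι (ι p) = p := by
    intro p hp
    rw [memS] at hp
    have hww : ∀ a, w (w a) = a := fun a => Equiv.swap_apply_self i j a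
    by_cases h : w p.1 < w p.2
    · simp only [hιdef, if_pos h, hww, if_pos hp]
    · simp only [hιdef, if_neg h, hww]
      rw [if_neg (asymm hp)]
  have hsum : ∀ h : Fin n × Fin n → ℕ, ∑ p ∈ S, h (ι p) = ∑ p ∈ S, h p := by
    intro h
    exact Finset.sum_nbij' ι ι hιS hιS hιι hιι (fun a _ => rfl)
  have hιval : ∀ (u : Fin n → Fin n) (p : Fin n × Fin n),
      pairCross (R (ι p).1) (R (ι p).2) (u (ι p).1) (u (ι p).2)
        = pairCross (R (w p.1)) (R (w p.2)) (u (w p.1)) (u (w p.2)) := by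
    intro u p
    by_cases h : w p.1 < w p.2
    · simp only [hιdef, if_pos h]
    · simp only [hιdef, if_neg h]
      exact (pairCross_comm _ _ _ _).symm
  -- main exchange claim for a vertex k not in {i, j}
  have hE : ∀ k, k ≠ i → k ≠ j →
      pairCross (R i) (R k) (σ j) (σ k) + pairCross (R j) (R k) (σ i) (σ k) ≤
        pairCross (R i) (R k) (σ i) (σ k) + pairCross (R j) (R k) (σ j) (σ k) := by
    intro k hki hkj
    exact exchange_key h1 h2 hσ (fun he => hki (σ.injective he))
      (fun he => hkj (σ.injective he))
  have key : ∀ p ∈ S, f p + f (ι p) ≤ g p + g (ι p) := by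
    intro p hp
    rw [memS] at hp
    obtain ⟨a, b⟩ := p
    simp only at hp
    have hab : a ≠ b := ne_of_lt hp
    show f (a, b) + f (ι (a, b)) ≤ g (a, b) + g (ι (a, b))
    have hfι := hιval τ (a, b)
    have hgι := hιval σ (a, b)
    simp only [hfdef, hgdef] at hfι hgι ⊢
    rw [hfι, hgι]
    by_cases hai : a = i
    · subst hai
      by_cases hbj : b = j
      · subst hbj
        rw [hwi, hwj, hτi, hτj]
        rw [pairCross_eq_left hσ, pairCross_eq_right hσ,
          pairCross_eq_right hσ, pairCross_eq_left hσ]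
        have := crossLower_pair h1 h2
        omega
      · have hbi : b ≠ a := hab.symm
        rw [hwi, hwk b hbi hbj, hτi, hτj, hτk b hbi hbj]
        exact hE b hbi hbj
    · by_cases haj : a = j
      · subst haj
        by_cases hbi : b = i
        · subst hbi
          rw [hwj, hwi, hτi, hτj]
          rw [pairCross_eq_right hσ, pairCross_eq_left hσ,
            pairCross_eq_left hσ, pairCross_eq_right hσ]
          have := crossLower_pair h1 h2
          omega
        · have hbj : b ≠ a := hab.symm
          rw [hwj, hwk b hbi hbj, hτi, hτj, hτk b hbi hbj]
          have := hE b hbi hbj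
          omega
      · by_cases hbi : b = i
        · subst hbi
          rw [hwi, hwk a hai haj, hτi, hτj, hτk a hai haj]
          simp only [pairCross_comm (R a)]
          have := hE a hai haj
          omega
        · by_cases hbj : b = j
          · subst hbj
            rw [hwj, hwk a hai haj, hτi, hτj, hτk a hai haj]
            simp only [pairCross_comm (R a)]
            have := hE a hai haj
            omega
          · rw [hwk a hai haj, hwk b hbi hbj, hτk a hai haj, hτk b hbi hbj]
  -- conclude
  have hle : ∑ p ∈ S, (f p + f (ι p)) ≤ ∑ p ∈ S, (g p + g (ι p)) :=
    Finset.sum_le_sum key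
  rw [Finset.sum_add_distrib, Finset.sum_add_distrib, hsum f, hsum g] at hle
  rw [hcr', hcr]
  omega
end

section
/- For every instance (R_1,…,R_n) of slotted OSCM-2, the minimum crossing number over all assignments equals the sum over all unordered pairs of distinct request indices of the pairwise minimum crossing number: opt = Σ_{1 ≤ i < j ≤ n} mincross(R_i,R_j). In particular, an assignment is optimal if and only if every pair of requests is placed in a relative order attaining its pairwise minimum number of crossings. -/
/-!
Placing two requests at distinct slots costs `crossLower` of them in their slot order, so every
assignment costs at least the sum of the pairwise minima. A case check shows that the request
with the smaller endpoint sum `a + b` should get the smaller slot; ordering all requests by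
`a + b` therefore attains every pairwise minimum at once.
-/

namespace Request

variable {n : ℕ}

lemma pairCross_of_lt (R R' : Request n) {s s' : Fin n} (h : s < s') :
    pairCross R R' s s' = crossLower R R' := by
  simp only [pairCross, crossLower, edgesCross, h, asymm h, true_and, false_and, or_false]

lemma pairCross_of_gt (R R' : Request n) {s s' : Fin n} (h : s' < s) :
    pairCross R R' s s' = crossLower R' R := by
  simp only [pairCross, crossLower, edgesCross, h, asymm h, true_and, false_and, false_or]
  split_ifs <;> omega

lemma mincross_le_pairCross (R R' : Request n) {s s' : Fin n} (h : s ≠ s') :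
    mincross R R' ≤ pairCross R R' s s' := by
  rcases h.lt_or_gt with h | h
  · rw [pairCross_of_lt R R' h]; exact min_le_left _ _
  · rw [pairCross_of_gt R R' h]; exact min_le_right _ _

lemma crossLower_le_of_sum_le (A B : Request n)
    (h : (A.fst : ℕ) + A.snd ≤ (B.fst : ℕ) + B.snd) :
    crossLower A B ≤ crossLower B A := by
  have ha := A.lt
  have hb := B.lt
  simp only [crossLower, Fin.lt_def] at *
  split_ifs <;> omega

end Request

open Request

lemma Equiv.Perm.exists_lt_imp_le {α : Type*} [LinearOrder α] {n : ℕ} (f : Fin n → α) :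
    ∃ σ : Equiv.Perm (Fin n), ∀ i j, σ i < σ j → f i ≤ f j := by
  refine ⟨(Tuple.sort f).symm, fun i j hij => ?_⟩
  simpa using Tuple.monotone_sort f hij.le

section Assignment

variable {n : ℕ} (R : Fin n → Request n)

def mincrossSum : ℕ :=
  ∑ p ∈ Finset.univ.filter (fun p : Fin n × Fin n => p.1 < p.2), mincross (R p.1) (R p.2)

lemma mincross_le_pairCross_perm (σ : Equiv.Perm (Fin n)) :
    ∀ p ∈ Finset.univ.filter (fun p : Fin n × Fin n => p.1 < p.2),
      mincross (R p.1) (R p.2) ≤ pairCross (R p.1) (R p.2) (σ p.1) (σ p.2) :=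
  fun _ hp => mincross_le_pairCross _ _ (σ.injective.ne (Finset.mem_filter.1 hp).2.ne)

lemma mincrossSum_le_cr (σ : Equiv.Perm (Fin n)) : mincrossSum R ≤ cr R σ :=
  Finset.sum_le_sum (mincross_le_pairCross_perm R σ)

lemma cr_eq_mincrossSum_iff (σ : Equiv.Perm (Fin n)) :
    cr R σ = mincrossSum R ↔
      ∀ i j : Fin n, i < j → pairCross (R i) (R j) (σ i) (σ j) = mincross (R i) (R j) := by
  rw [eq_comm, mincrossSum, cr, Finset.sum_eq_sum_iff_of_le (mincross_le_pairCross_perm R σ)]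
  simp only [Finset.mem_filter, Finset.mem_univ, true_and, Prod.forall, eq_comm]

lemma exists_cr_eq_mincrossSum : ∃ σ : Equiv.Perm (Fin n), cr R σ = mincrossSum R := by
  obtain ⟨σ, hσ⟩ := Equiv.Perm.exists_lt_imp_le fun i => ((R i).fst : ℕ) + (R i).snd
  refine ⟨σ, (cr_eq_mincrossSum_iff R σ).2 fun i j _ => ?_⟩
  rcases (σ.injective.ne ‹i < j›.ne).lt_or_gt with h | h
  · rw [pairCross_of_lt _ _ h, mincross, min_eq_left (crossLower_le_of_sum_le _ _ (hσ i j h))]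
  · rw [pairCross_of_gt _ _ h, mincross, min_eq_right (crossLower_le_of_sum_le _ _ (hσ j i h))]

lemma opt_eq_mincrossSum : opt R = mincrossSum R := by
  obtain ⟨σ₀, hσ₀⟩ := exists_cr_eq_mincrossSum R
  exact IsLeast.csInf_eq ⟨⟨σ₀, hσ₀⟩, by rintro _ ⟨σ, rfl⟩; exact mincrossSum_le_cr R σ⟩

end Assignment

/-- The minimum crossing number equals the sum over all unordered pairs of requests
of the pairwise minimum crossing number; in particular an assignment is optimal iff
every pair of requests attains its pairwise minimum number of crossings. -/
theorem opt_eq_sum_mincross {n : ℕ} (R : Fin n → Request n) :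
    opt R = (∑ p ∈ Finset.univ.filter (fun p : Fin n × Fin n => p.1 < p.2),
        mincross (R p.1) (R p.2)) ∧
    ∀ σ : Equiv.Perm (Fin n),
      (cr R ⇑σ = opt R ↔
        ∀ i j : Fin n, i < j →
          pairCross (R i) (R j) (σ i) (σ j) = mincross (R i) (R j)) :=
  ⟨opt_eq_mincrossSum R, fun σ => opt_eq_mincrossSum R ▸ cr_eq_mincrossSum_iff R σ⟩
end

section
/- Let (R_1,…,R_n) be an instance of slotted OSCM-2 and let σ be any assignment that is monotone with respect to the lexicographic order on requests: whenever (min R_i, max R_i) is lexicographically strictly smaller than (min R_j, max R_j), we have σ(i) < σ(j). Then σ attains the minimum crossing number, cr(σ) = opt. In particular, the offline slotted OSCM-2 problem is solved optimally by assigning the requests to the slots in sorted order. -/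
lemma pairCross_of_lt {n : ℕ} (R R' : Request n) {s s' : Fin n} (h : s < s') :
    pairCross R R' s s' = crossLower R R' := by
  have h2 : ¬ s' < s := asymm h
  simp [pairCross, edgesCross, crossLower, h, h2]

lemma pairCross_of_gt {n : ℕ} (R R' : Request n) {s s' : Fin n} (h : s' < s) :
    pairCross R R' s s' = crossLower R' R := by
  have h2 : ¬ s < s' := asymm h
  simp only [pairCross, edgesCross, crossLower, h, h2, false_and, true_and,
    false_or, or_false]
  split_ifs <;> omega

lemma crossLower_le_of_lex {n : ℕ} (R R' : Request n)
    (h : R.fst < R'.fst ∨ (R.fst = R'.fst ∧ R.snd < R'.snd)) :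
    crossLower R R' ≤ crossLower R' R := by
  have h1 := R.lt; have h2 := R'.lt
  simp only [crossLower, Fin.lt_def]
  simp only [Fin.lt_def, Fin.ext_iff] at h h1 h2
  split_ifs <;> omega

lemma crossLower_eq_of_eq {n : ℕ} (R R' : Request n) (h1 : R.fst = R'.fst)
    (h2 : R.snd = R'.snd) : crossLower R R' = crossLower R' R := by
  simp [crossLower, h1, h2]

/-- Any assignment monotone with respect to the lexicographic order on the requests
attains the minimum crossing number: offline slotted OSCM-2 is solved optimally by
assigning the requests to the slots in sorted order. -/
theorem cr_sorted_eq_opt {n : ℕ} (R : Fin n → Request n) (σ : Equiv.Perm (Fin n))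
    (hmono : ∀ i j : Fin n,
      ((R i).fst < (R j).fst ∨ ((R i).fst = (R j).fst ∧ (R i).snd < (R j).snd)) →
      σ i < σ j) :
    cr R ⇑σ = opt R := by
  classical
  set M : ℕ := ∑ p ∈ Finset.univ.filter (fun p : Fin n × Fin n => p.1 < p.2),
      mincross (R p.1) (R p.2) with hM
  have hlow : ∀ τ : Equiv.Perm (Fin n), M ≤ cr R ⇑τ := by
    intro τ
    apply Finset.sum_le_sum
    intro p hp
    simp only [Finset.mem_filter] at hp
    have hne : τ p.1 ≠ τ p.2 := fun h => absurd (τ.injective h) (ne_of_lt hp.2)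
    rcases lt_or_gt_of_ne hne with h | h
    · rw [pairCross_of_lt _ _ h]; exact min_le_left _ _
    · rw [pairCross_of_gt _ _ h]; exact min_le_right _ _
  have heq : cr R ⇑σ = M := by
    unfold cr; rw [hM]
    apply Finset.sum_congr rfl
    intro p hp
    simp only [Finset.mem_filter] at hp
    rcases lt_trichotomy (R p.1).fst (R p.2).fst with h | h | h
    · rw [pairCross_of_lt _ _ (hmono p.1 p.2 (Or.inl h))]
      exact (min_eq_left (crossLower_le_of_lex _ _ (Or.inl h))).symm
    · rcases lt_trichotomy (R p.1).snd (R p.2).snd with h' | h' | h'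
      · rw [pairCross_of_lt _ _ (hmono p.1 p.2 (Or.inr ⟨h, h'⟩))]
        exact (min_eq_left (crossLower_le_of_lex _ _ (Or.inr ⟨h, h'⟩))).symm
      · have he := crossLower_eq_of_eq (R p.1) (R p.2) h h'
        have hne : σ p.1 ≠ σ p.2 := fun hh => absurd (σ.injective hh) (ne_of_lt hp.2)
        rcases lt_or_gt_of_ne hne with hs | hs
        · rw [pairCross_of_lt _ _ hs, mincross, he, min_self]
        · rw [pairCross_of_gt _ _ hs, mincross, he, min_self]
      · rw [pairCross_of_gt _ _ (hmono p.2 p.1 (Or.inr ⟨h.symm, h'⟩))]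
        exact (min_eq_right (crossLower_le_of_lex _ _ (Or.inr ⟨h.symm, h'⟩))).symm
    · rw [pairCross_of_gt _ _ (hmono p.2 p.1 (Or.inl h))]
      exact (min_eq_right (crossLower_le_of_lex _ _ (Or.inl h))).symm
  unfold opt
  apply le_antisymm
  · apply le_csInf (⟨cr R ⇑σ, σ, rfl⟩ :
      Set.Nonempty {c : ℕ | ∃ τ : Equiv.Perm (Fin n), cr R ⇑τ = c})
    rintro c ⟨τ, rfl⟩
    rw [heq]; exact hlow τ
  · exact Nat.sInf_le
      (show cr R ⇑σ ∈ {c : ℕ | ∃ τ : Equiv.Perm (Fin n), cr R ⇑τ = c} from ⟨σ, rfl⟩)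
end

section
/- For every ε > 0 there exist n and a 2-regular instance σ of n requests such that the assignment produced by the slotted barycenter algorithm on σ has crossing number at least (8 − ε) · opt(σ), with opt(σ) ≥ 1. Hence the slotted barycenter algorithm is no better than 8-competitive for slotted OSCM-2 on 2-regular instances. -/
set_option maxRecDepth 100000


/-- Key encoding the pair (distance to the barycenter `⌊(x₁+x₂)/2⌋`, slot index)
lexicographically; minimizing it picks the closest free slot, leftmost on ties. -/
def baryKey {n : ℕ} (R : Request n) (s : Fin n) : ℕ :=
  Nat.dist s.1 ((R.fst.1 + R.snd.1) / 2) * n + s.1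

/-- The free slot chosen by the barycenter algorithm for request `R`. -/
noncomputable def baryChoice {n : ℕ} (free : Finset (Fin n)) (R : Request n) : Fin n :=
  if h : free.Nonempty then (Finset.exists_min_image free (baryKey R) h).choose
  else R.fst

/-- Slots chosen by the barycenter algorithm on the first `k` requests. -/
noncomputable def baryListAux {n : ℕ} (R : Fin n → Request n) : ℕ → List (Fin n)
  | 0 => []
  | k + 1 =>
    let prev := baryListAux R k
    if h : k < n then
      prev ++ [baryChoice (Finset.univ \ prev.toFinset) (R ⟨k, h⟩)]
    else prev

/-- The assignment produced by the slotted barycenter algorithm. -/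
noncomputable def baryAssign {n : ℕ} (R : Fin n → Request n) : Fin n → Fin n :=
  fun i => (baryListAux R n).getD i.1 (R i).fst


def Rlist : List (Request 16) :=
  [⟨0, 1, by decide⟩, ⟨2, 3, by decide⟩, ⟨2, 3, by decide⟩, ⟨4, 5, by decide⟩, ⟨4, 5, by decide⟩, ⟨6, 7, by decide⟩, ⟨6, 7, by decide⟩, ⟨8, 9, by decide⟩, ⟨8, 9, by decide⟩, ⟨10, 11, by decide⟩, ⟨10, 11, by decide⟩, ⟨12, 13, by decide⟩, ⟨12, 13, by decide⟩, ⟨14, 15, by decide⟩, ⟨14, 15, by decide⟩, ⟨0, 1, by decide⟩]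

def R16 : Fin 16 → Request 16 := fun i => Rlist.getD i.1 ⟨0, 1, by decide⟩

lemma baryKey_inj {n : ℕ} (R : Request n) {a b : Fin n} (h : baryKey R a = baryKey R b) :
    a = b := by
  unfold baryKey at h
  have ha := a.2
  have hb := b.2
  have h2 := congrArg (· % n) h
  simp only [Nat.mul_add_mod_of_lt ha, Nat.mul_add_mod_of_lt hb] at h2
  exact Fin.ext h2

lemma baryChoice_eq {n : ℕ} (free : Finset (Fin n)) (R : Request n) (s : Fin n)
    (hs : s ∈ free) (hmin : ∀ t ∈ free, baryKey R s ≤ baryKey R t) :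
    baryChoice free R = s := by
  have hne : free.Nonempty := ⟨s, hs⟩
  unfold baryChoice
  rw [dif_pos hne]
  obtain ⟨hmem, hminc⟩ := (Finset.exists_min_image free (baryKey R) hne).choose_spec
  exact baryKey_inj R (le_antisymm (hminc s hs) (hmin _ hmem))

lemma baryListAux_succ {n : ℕ} (R : Fin n → Request n) (k : ℕ) (hk : k < n) :
    baryListAux R (k + 1) =
      baryListAux R k ++
        [baryChoice (Finset.univ \ (baryListAux R k).toFinset) (R ⟨k, hk⟩)] := by
  rw [baryListAux]
  simp [hk]

def wPerm : Equiv.Perm (Fin 16) where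
  toFun := fun i => (([0,2,3,4,5,6,7,8,9,10,11,12,13,14,15,1] : List (Fin 16)).getD i.1 0)
  invFun := fun i => (([0,15,1,2,3,4,5,6,7,8,9,10,11,12,13,14] : List (Fin 16)).getD i.1 0)
  left_inv := by decide
  right_inv := by decide


/-- The slotted barycenter algorithm is no better than 8-competitive on 2-regular
instances: for every `ε > 0` there are `n` and a 2-regular instance `R` with
`opt R ≥ 1` on which the barycenter assignment has at least `(8 − ε) · opt R`
crossings. -/
theorem barycenter_not_better_than_8 (ε : ℝ) (hε : 0 < ε) :
    ∃ (n : ℕ) (R : Fin n → Request n), TwoRegular R ∧ 1 ≤ opt R ∧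
      (8 - ε) * (opt R : ℝ) ≤ (cr R (baryAssign R) : ℝ) := by

  refine ⟨16, R16, by unfold TwoRegular; decide, ?_, ?_⟩
  · -- opt ≥ 1
    rw [Nat.one_le_iff_ne_zero]
    intro h0
    have hne : {c : ℕ | ∃ σ : Equiv.Perm (Fin 16), cr R16 (⇑σ) = c}.Nonempty :=
      ⟨cr R16 (⇑wPerm), wPerm, rfl⟩
    obtain ⟨σ, hσ⟩ := Nat.sInf_mem hne
    have hσ0 : cr R16 (⇑σ) = 0 := hσ.trans h0
    have hkey : ∀ s s' : Fin 16, s ≠ s' → 1 ≤ pairCross (R16 1) (R16 2) s s' := by decide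
    have h12 : (σ 1 : Fin 16) ≠ σ 2 := fun h => by simpa using σ.injective h
    have hle : 1 ≤ cr R16 (⇑σ) := by
      refine le_trans (hkey _ _ h12) ?_
      have hmem : ((1 : Fin 16), (2 : Fin 16)) ∈
          Finset.univ.filter (fun p : Fin 16 × Fin 16 => p.1 < p.2) := by decide
      exact Finset.single_le_sum (f := fun p : Fin 16 × Fin 16 =>
        pairCross (R16 p.1) (R16 p.2) (σ p.1) (σ p.2)) (fun _ _ => Nat.zero_le _) hmem
    omega
  · -- main inequality
    have h0 : baryListAux R16 0 = ([] : List (Fin 16)) := rfl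
    have h1 : baryListAux R16 1 = ([(0:Fin 16)] : List (Fin 16)) := by
      rw [baryListAux_succ R16 0 (by norm_num), h0,
        baryChoice_eq _ _ (0 : Fin 16) (by decide) (by decide)]
      rfl
    have h2 : baryListAux R16 2 = ([(0:Fin 16), (2:Fin 16)] : List (Fin 16)) := by
      rw [baryListAux_succ R16 1 (by norm_num), h1,
        baryChoice_eq _ _ (2 : Fin 16) (by decide) (by decide)]
      rfl
    have h3 : baryListAux R16 3 = ([(0:Fin 16), (2:Fin 16), (1:Fin 16)] : List (Fin 16)) := by
      rw [baryListAux_succ R16 2 (by norm_num), h2,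
        baryChoice_eq _ _ (1 : Fin 16) (by decide) (by decide)]
      rfl
    have h4 : baryListAux R16 4 = ([(0:Fin 16), (2:Fin 16), (1:Fin 16), (4:Fin 16)] : List (Fin 16)) := by
      rw [baryListAux_succ R16 3 (by norm_num), h3,
        baryChoice_eq _ _ (4 : Fin 16) (by decide) (by decide)]
      rfl
    have h5 : baryListAux R16 5 = ([(0:Fin 16), (2:Fin 16), (1:Fin 16), (4:Fin 16), (3:Fin 16)] : List (Fin 16)) := by
      rw [baryListAux_succ R16 4 (by norm_num), h4,
        baryChoice_eq _ _ (3 : Fin 16) (by decide) (by decide)]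
      rfl
    have h6 : baryListAux R16 6 = ([(0:Fin 16), (2:Fin 16), (1:Fin 16), (4:Fin 16), (3:Fin 16), (6:Fin 16)] : List (Fin 16)) := by
      rw [baryListAux_succ R16 5 (by norm_num), h5,
        baryChoice_eq _ _ (6 : Fin 16) (by decide) (by decide)]
      rfl
    have h7 : baryListAux R16 7 = ([(0:Fin 16), (2:Fin 16), (1:Fin 16), (4:Fin 16), (3:Fin 16), (6:Fin 16), (5:Fin 16)] : List (Fin 16)) := by
      rw [baryListAux_succ R16 6 (by norm_num), h6,
        baryChoice_eq _ _ (5 : Fin 16) (by decide) (by decide)]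
      rfl
    have h8 : baryListAux R16 8 = ([(0:Fin 16), (2:Fin 16), (1:Fin 16), (4:Fin 16), (3:Fin 16), (6:Fin 16), (5:Fin 16), (8:Fin 16)] : List (Fin 16)) := by
      rw [baryListAux_succ R16 7 (by norm_num), h7,
        baryChoice_eq _ _ (8 : Fin 16) (by decide) (by decide)]
      rfl
    have h9 : baryListAux R16 9 = ([(0:Fin 16), (2:Fin 16), (1:Fin 16), (4:Fin 16), (3:Fin 16), (6:Fin 16), (5:Fin 16), (8:Fin 16), (7:Fin 16)] : List (Fin 16)) := by
      rw [baryListAux_succ R16 8 (by norm_num), h8,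
        baryChoice_eq _ _ (7 : Fin 16) (by decide) (by decide)]
      rfl
    have h10 : baryListAux R16 10 = ([(0:Fin 16), (2:Fin 16), (1:Fin 16), (4:Fin 16), (3:Fin 16), (6:Fin 16), (5:Fin 16), (8:Fin 16), (7:Fin 16), (10:Fin 16)] : List (Fin 16)) := by
      rw [baryListAux_succ R16 9 (by norm_num), h9,
        baryChoice_eq _ _ (10 : Fin 16) (by decide) (by decide)]
      rfl
    have h11 : baryListAux R16 11 = ([(0:Fin 16), (2:Fin 16), (1:Fin 16), (4:Fin 16), (3:Fin 16), (6:Fin 16), (5:Fin 16), (8:Fin 16), (7:Fin 16), (10:Fin 16), (9:Fin 16)] : List (Fin 16)) := by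
      rw [baryListAux_succ R16 10 (by norm_num), h10,
        baryChoice_eq _ _ (9 : Fin 16) (by decide) (by decide)]
      rfl
    have h12 : baryListAux R16 12 = ([(0:Fin 16), (2:Fin 16), (1:Fin 16), (4:Fin 16), (3:Fin 16), (6:Fin 16), (5:Fin 16), (8:Fin 16), (7:Fin 16), (10:Fin 16), (9:Fin 16), (12:Fin 16)] : List (Fin 16)) := by
      rw [baryListAux_succ R16 11 (by norm_num), h11,
        baryChoice_eq _ _ (12 : Fin 16) (by decide) (by decide)]
      rfl
    have h13 : baryListAux R16 13 = ([(0:Fin 16), (2:Fin 16), (1:Fin 16), (4:Fin 16), (3:Fin 16), (6:Fin 16), (5:Fin 16), (8:Fin 16), (7:Fin 16), (10:Fin 16), (9:Fin 16), (12:Fin 16), (11:Fin 16)] : List (Fin 16)) := by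
      rw [baryListAux_succ R16 12 (by norm_num), h12,
        baryChoice_eq _ _ (11 : Fin 16) (by decide) (by decide)]
      rfl
    have h14 : baryListAux R16 14 = ([(0:Fin 16), (2:Fin 16), (1:Fin 16), (4:Fin 16), (3:Fin 16), (6:Fin 16), (5:Fin 16), (8:Fin 16), (7:Fin 16), (10:Fin 16), (9:Fin 16), (12:Fin 16), (11:Fin 16), (14:Fin 16)] : List (Fin 16)) := by
      rw [baryListAux_succ R16 13 (by norm_num), h13,
        baryChoice_eq _ _ (14 : Fin 16) (by decide) (by decide)]
      rfl
    have h15 : baryListAux R16 15 = ([(0:Fin 16), (2:Fin 16), (1:Fin 16), (4:Fin 16), (3:Fin 16), (6:Fin 16), (5:Fin 16), (8:Fin 16), (7:Fin 16), (10:Fin 16), (9:Fin 16), (12:Fin 16), (11:Fin 16), (14:Fin 16), (13:Fin 16)] : List (Fin 16)) := by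
      rw [baryListAux_succ R16 14 (by norm_num), h14,
        baryChoice_eq _ _ (13 : Fin 16) (by decide) (by decide)]
      rfl
    have h16 : baryListAux R16 16 = ([(0:Fin 16), (2:Fin 16), (1:Fin 16), (4:Fin 16), (3:Fin 16), (6:Fin 16), (5:Fin 16), (8:Fin 16), (7:Fin 16), (10:Fin 16), (9:Fin 16), (12:Fin 16), (11:Fin 16), (14:Fin 16), (13:Fin 16), (15:Fin 16)] : List (Fin 16)) := by
      rw [baryListAux_succ R16 15 (by norm_num), h15,
        baryChoice_eq _ _ (15 : Fin 16) (by decide) (by decide)]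
      rfl
    have hbary : cr R16 (baryAssign R16) = 64 := by
      have hA : baryAssign R16 = fun i : Fin 16 =>
          (([(0:Fin 16), (2:Fin 16), (1:Fin 16), (4:Fin 16), (3:Fin 16), (6:Fin 16), (5:Fin 16), (8:Fin 16), (7:Fin 16), (10:Fin 16), (9:Fin 16), (12:Fin 16), (11:Fin 16), (14:Fin 16), (13:Fin 16), (15:Fin 16)] : List (Fin 16)).getD i.1 (R16 i).fst) := by
        funext i
        simp only [baryAssign, h16]
      rw [hA]
      decide
    have hwit : cr R16 (⇑wPerm) = 8 := by decide
    have hopt : opt R16 ≤ 8 := by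
      have : (8 : ℕ) ∈ {c : ℕ | ∃ σ : Equiv.Perm (Fin 16), cr R16 (⇑σ) = c} := ⟨wPerm, hwit⟩
      exact Nat.sInf_le this
    have hoptR : (opt R16 : ℝ) ≤ 8 := by exact_mod_cast hopt
    have hnn : (0 : ℝ) ≤ (opt R16 : ℝ) := Nat.cast_nonneg _
    rw [hbary]
    push_cast
    nlinarith [mul_nonneg hε.le hnn]
end

section
/- Let a 2-regular instance have its first k requests assigned to pairwise distinct slots, and suppose the (k+1)-st request R = {x₁,x₂} is assigned to a free slot s_x. Let y₁ ≤ y₂ be the vertices whose propagation arrows pointed to s_x before this assignment. Then only propagation arrows attached to vertices in the closed interval from min(x₁,y₁) to max(x₂,y₂) change: every vertex outside this interval has exactly the same propagation-arrow targets before and after the assignment. -/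
/-- Degree of vertex `v` after the first `k` requests: its number of occurrences
among `R_0, …, R_{k-1}`. -/
def degAt {n : ℕ} (R : Fin n → Request n) (k : ℕ) (v : Fin n) : ℕ :=
  ∑ i ∈ Finset.univ.filter (fun i : Fin n => i.1 < k),
    ((if (R i).fst = v then 1 else 0) + (if (R i).snd = v then 1 else 0))

/-- Free (unfulfilled) slots after the first `k` requests have been assigned by `σ`. -/
def freeAt {n : ℕ} (R : Fin n → Request n) (σ : Fin n → Fin n) (k : ℕ) : Finset (Fin n) :=
  Finset.univ \ (Finset.univ.filter (fun i : Fin n => i.1 < k)).image σ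

/-- `L_V`: the nondecreasing list in which each vertex `v` appears `2 - degAt v` times. -/
def vertexList {n : ℕ} (R : Fin n → Request n) (k : ℕ) : List (Fin n) :=
  Multiset.sort (∑ v : Fin n, Multiset.replicate (2 - degAt R k v) v) (· ≤ ·)

/-- `L_S`: the nondecreasing list containing each free slot twice. -/
def slotList {n : ℕ} (R : Fin n → Request n) (σ : Fin n → Fin n) (k : ℕ) : List (Fin n) :=
  Multiset.sort (∑ s ∈ freeAt R σ k, Multiset.replicate 2 s) (· ≤ ·)

/-- The propagation arrows of the partial state: the pairs `(L_V(i), L_S(i))`. -/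
def arrows {n : ℕ} (R : Fin n → Request n) (σ : Fin n → Fin n) (k : ℕ) :
    List (Fin n × Fin n) :=
  (vertexList R k).zip (slotList R σ k)

/-- An arrow `(v,s)` crosses an edge `(s₁,u)` iff `(s₁ < s ∧ v < u) ∨ (s < s₁ ∧ u < v)`. -/
def arrowEdgeCross {n : ℕ} (v s s₁ u : Fin n) : Prop :=
  (s₁ < s ∧ v < u) ∨ (s < s₁ ∧ u < v)

instance {n : ℕ} (v s s₁ u : Fin n) : Decidable (arrowEdgeCross v s s₁ u) := by
  unfold arrowEdgeCross; infer_instance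

/-- Total number of edge–edge crossings plus edge–propagation-arrow crossings of
the partial state after the first `k` requests are assigned by `σ`. -/
def partialCost {n : ℕ} (R : Fin n → Request n) (σ : Fin n → Fin n) (k : ℕ) : ℕ :=
  (∑ p ∈ Finset.univ.filter (fun p : Fin n × Fin n => p.1 < p.2 ∧ p.2.1 < k),
      pairCross (R p.1) (R p.2) (σ p.1) (σ p.2)) +
  ∑ i ∈ Finset.univ.filter (fun i : Fin n => i.1 < k),
    ((arrows R σ k).map (fun a =>
        (if arrowEdgeCross a.1 a.2 (σ i) (R i).fst then 1 else 0) +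
        (if arrowEdgeCross a.1 a.2 (σ i) (R i).snd then 1 else 0))).sum

/-- A run of the greedy algorithm: each arriving request `R_k` is assigned to a free
slot minimizing the total number of edge–edge plus edge–arrow crossings of the
resulting partial state. -/
def GreedyRun {n : ℕ} (R : Fin n → Request n) (σ : Equiv.Perm (Fin n)) : Prop :=
  ∀ (k : Fin n) (s : Fin n), s ∈ freeAt R (⇑σ) k.1 →
    partialCost R (⇑σ) (k.1 + 1) ≤ partialCost R (Function.update (⇑σ) k s) (k.1 + 1)

/-! Because both lists are sorted, the arrows of a vertex `w` occupy the block of positions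
`[#{v < w}, #{v ≤ w})` of the slot list. Assigning `R_k = {x₁, x₂}` to `s_x` deletes `x₁, x₂`
from the vertex list and the two copies of `s_x` from the slot list; those copies sit at the two
positions whose arrows start at `y₁, y₂`. If `w` lies below `x₁` and `y₁`, its block keeps its
place and lies before the copies of `s_x`. If `w` lies above `x₂` and `y₂`, its block moves two
places to the left in both lists and lies after the copies of `s_x`. -/

namespace List

variable {α β : Type*} [LinearOrder α]

theorem map_snd_filter_zip_fst_eq {L : List α} (hL : L.SortedLE) (B : List β) (w : α) :
    ((L.zip B).filter (fun p => p.1 = w)).map Prod.snd =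
      (B.take (L.countP (· ≤ w))).drop (L.countP (· < w)) := by
  induction L generalizing B with
  | nil => simp
  | cons x L ih =>
    obtain ⟨hxL, hL⟩ := pairwise_cons.1 hL.pairwise
    cases B with
    | nil => simp
    | cons b B =>
      rcases lt_trichotomy x w with hx | rfl | hx
      · simp [hx, hx.le, hx.ne, ih hL.sortedLE]
      · have : L.countP (· < x) = 0 :=
          countP_eq_zero.2 fun a ha => by simpa using hxL a ha
        simp [ih hL.sortedLE, this]
      · have : L.countP (· ≤ w) = 0 :=
          countP_eq_zero.2 fun a ha => by simpa using hx.trans_le (hxL a ha)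
        simp [hx, hx.ne', ih hL.sortedLE, this]

theorem countP_le_le_of_lt_getElem {L : List α} (hL : L.SortedLE) {i : ℕ}
    (hi : i < L.length) {w : α} (hw : w < L[i]) : L.countP (· ≤ w) ≤ i := by
  have hdrop : (L.drop i).countP (· ≤ w) = 0 := by
    refine countP_eq_zero.2 fun a ha => ?_
    obtain ⟨j, hj, rfl⟩ := mem_drop_iff_getElem.1 ha
    simpa using hw.trans_le (hL.getElem_le_getElem_of_le (by omega))
  calc L.countP (· ≤ w) = (L.take i).countP (· ≤ w) + (L.drop i).countP (· ≤ w) := by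
        rw [← countP_append, take_append_drop]
    _ = (L.take i).countP (· ≤ w) := by rw [hdrop, add_zero]
    _ ≤ (L.take i).length := countP_le_length
    _ ≤ i := length_take_le _ _

theorem lt_countP_of_getElem_lt {L : List α} (hL : L.SortedLE) {i : ℕ} (hi : i < L.length)
    {w : α} (hw : L[i] < w) : i < L.countP (· < w) := by
  have htake : ∀ a ∈ L.take (i + 1), a < w := by
    intro a ha
    obtain ⟨j, hj, rfl⟩ := mem_take_iff_getElem.1 ha
    exact (hL.getElem_le_getElem_of_le (by omega)).trans_lt hw
  calc i < (L.take (i + 1)).length := by simp; omega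
    _ = (L.take (i + 1)).countP (· < w) := (countP_eq_length.2 (by simpa using htake)).symm
    _ ≤ L.countP (· < w) := (take_sublist _ _).countP_le

theorem exists_eq_append_cons_cons_of_perm {B B' : List α} {s : α} (hB : B.SortedLE)
    (hB' : B'.SortedLE) (h : B ~ B' ++ [s, s]) :
    ∃ P S, B' = P ++ S ∧ B = P ++ s :: s :: S := by
  set p : α → Bool := fun b => decide ¬s ≤ b
  refine ⟨B'.takeWhile p, B'.dropWhile p, takeWhile_append_dropWhile.symm, ?_⟩
  have hins : B = (B'.orderedInsert (· ≤ ·) s).orderedInsert (· ≤ ·) s := by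
    refine Perm.eq_of_sortedLE hB ?_ ?_
    · exact ((hB'.pairwise.orderedInsert _ _).orderedInsert _ _).sortedLE
    · calc B ~ B' ++ [s, s] := h
        _ ~ s :: s :: B' := perm_append_comm
        _ ~ s :: B'.orderedInsert (· ≤ ·) s := ((perm_orderedInsert _ _ _).symm).cons s
        _ ~ _ := (perm_orderedInsert _ _ _).symm
  have hT : ∀ a ∈ B'.takeWhile p, p a := fun a ha => mem_takeWhile_imp ha
  have hs : ¬ p s := by simp [p]
  rw [hins, orderedInsert_eq_take_drop, orderedInsert_eq_take_drop, takeWhile_append_of_pos hT,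
    dropWhile_append_of_pos hT, takeWhile_cons_of_neg hs, dropWhile_cons_of_neg hs, append_nil]

section Shift

variable {A A' : List α} {x₁ x₂ w : α} (hA : A.SortedLE) (hA' : A'.SortedLE)
  (hperm : A ~ A' ++ [x₁, x₂])
include hA hA' hperm

theorem map_snd_filter_zip_fst_append_eq_of_lt (hx₁ : w < x₁) (hx₂ : w < x₂)
    (P Q Q' : List β) (hP : P.length < A.length) (hw : w < A[P.length]) :
    ((A.zip (P ++ Q)).filter (fun p => p.1 = w)).map Prod.snd =
      ((A'.zip (P ++ Q')).filter (fun p => p.1 = w)).map Prod.snd := by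
  have hlt : A.countP (· < w) = A'.countP (· < w) := by
    simp [hperm.countP_eq, hx₁.not_gt, hx₂.not_gt]
  have hle : A.countP (· ≤ w) = A'.countP (· ≤ w) := by
    simp [hperm.countP_eq, hx₁.not_ge, hx₂.not_ge]
  have hbound := countP_le_le_of_lt_getElem hA hP hw
  rw [map_snd_filter_zip_fst_eq hA, map_snd_filter_zip_fst_eq hA', ← hlt, ← hle,
    take_append_of_le_length hbound, take_append_of_le_length hbound]

theorem map_snd_filter_zip_fst_append_cons_cons_eq_of_gt (hx₁ : x₁ < w) (hx₂ : x₂ < w)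
    (P S : List β) (s : β) (hP : P.length + 1 < A.length) (hw : A[P.length + 1] < w) :
    ((A.zip (P ++ s :: s :: S)).filter (fun p => p.1 = w)).map Prod.snd =
      ((A'.zip (P ++ S)).filter (fun p => p.1 = w)).map Prod.snd := by
  have hlt : A.countP (· < w) = A'.countP (· < w) + 2 := by
    simp [hperm.countP_eq, hx₁, hx₂]
  have hle : A.countP (· ≤ w) = A'.countP (· ≤ w) + 2 := by
    simp [hperm.countP_eq, hx₁.le, hx₂.le]
  have hbound := lt_countP_of_getElem_lt hA hP hw
  have hmono : A'.countP (· < w) ≤ A'.countP (· ≤ w) :=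
    countP_mono_left fun a _ h => by simpa using (of_decide_eq_true h).le
  obtain ⟨i, hi⟩ : ∃ i, A'.countP (· < w) = P.length + i :=
    ⟨_, (Nat.add_sub_of_le (by omega)).symm⟩
  obtain ⟨j, hj⟩ : ∃ j, A'.countP (· ≤ w) = P.length + j :=
    ⟨_, (Nat.add_sub_of_le (by omega)).symm⟩
  rw [map_snd_filter_zip_fst_eq hA, map_snd_filter_zip_fst_eq hA', hlt, hle, hi, hj, add_assoc,
    add_assoc, take_length_add_append, take_length_add_append, drop_length_add_append,
    drop_length_add_append]
  rfl

theorem map_snd_filter_zip_fst_eq_of_lt_min_or_max_lt {P S : List β} {s : β} {y₁ y₂ : α}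
    (hx : x₁ ≤ x₂) (hy : y₁ ≤ y₂) (hlen : A.length = (P ++ s :: s :: S).length)
    (hall : ∀ p ∈ A.zip (P ++ s :: s :: S), p.2 = s → p.1 = y₁ ∨ p.1 = y₂)
    (hw : w < min x₁ y₁ ∨ max x₂ y₂ < w) :
    ((A.zip (P ++ s :: s :: S)).filter (fun p => p.1 = w)).map Prod.snd =
      ((A'.zip (P ++ S)).filter (fun p => p.1 = w)).map Prod.snd := by
  simp only [length_append, length_cons] at hlen
  have hmid : ∀ j < 2, ∀ h : P.length + j < A.length,
      A[P.length + j] = y₁ ∨ A[P.length + j] = y₂ := by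
    intro j hj h
    have hmem := getElem_mem (l := A.zip (P ++ s :: s :: S)) (n := P.length + j) (by simp; omega)
    rw [getElem_zip] at hmem
    exact hall _ hmem (by interval_cases j <;> simp)
  rcases hw with hw | hw
  · rw [lt_min_iff] at hw
    refine map_snd_filter_zip_fst_append_eq_of_lt hA hA' hperm hw.1 (hw.1.trans_le hx)
      _ _ _ (by omega) ?_
    rcases hmid 0 (by norm_num) (by omega) with h | h <;> simp only [add_zero] at h <;> rw [h]
    exacts [hw.2, hw.2.trans_le hy]
  · rw [max_lt_iff] at hw
    refine map_snd_filter_zip_fst_append_cons_cons_eq_of_gt hA hA' hperm (hx.trans_lt hw.1) hw.1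
      _ _ _ (by omega) ?_
    rcases hmid 1 (by norm_num) (by omega) with h | h <;> rw [h]
    exacts [hy.trans_lt hw.2, hw.2]

end Shift

end List

theorem Fin.filter_val_lt_succ {n k : ℕ} (hk : k < n) :
    Finset.univ.filter (fun i : Fin n => i.1 < k + 1) =
      insert ⟨k, hk⟩ (Finset.univ.filter (fun i : Fin n => i.1 < k)) := by
  ext i
  simp [Fin.ext_iff]
  omega

section PartialState

variable {n : ℕ} (R : Fin n → Request n)

theorem degAt_le_two (hR : TwoRegular R) (k : ℕ) (v : Fin n) : degAt R k v ≤ 2 :=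
  hR v ▸ Finset.sum_le_sum_of_subset (Finset.filter_subset _ _)

theorem degAt_succ {k : ℕ} (hk : k < n) (v : Fin n) :
    degAt R (k + 1) v = degAt R k v +
      ((if (R ⟨k, hk⟩).fst = v then 1 else 0) + (if (R ⟨k, hk⟩).snd = v then 1 else 0)) := by
  rw [degAt, Fin.filter_val_lt_succ hk, Finset.sum_insert (by simp), add_comm, degAt]

theorem sum_degAt {k : ℕ} (hk : k ≤ n) : ∑ v, degAt R k v = 2 * k := by
  unfold degAt
  rw [Finset.sum_comm]
  simp [Finset.sum_add_distrib, Fin.card_filter_val_lt, hk, mul_comm]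

theorem sortedLE_vertexList (k : ℕ) : (vertexList R k).SortedLE :=
  (Multiset.pairwise_sort _ _).sortedLE

theorem length_vertexList (hR : TwoRegular R) {k : ℕ} (hk : k ≤ n) :
    (vertexList R k).length = 2 * (n - k) := by
  have hsum : ∑ v, (2 - degAt R k v) + ∑ v, degAt R k v = ∑ _v : Fin n, 2 := by
    rw [← Finset.sum_add_distrib]
    exact Finset.sum_congr rfl fun v _ => Nat.sub_add_cancel (degAt_le_two R hR k v)
  simp only [vertexList, Multiset.length_sort, Multiset.card_sum, Multiset.card_replicate]
  simp only [sum_degAt R hk, Finset.sum_const, Finset.card_univ, Fintype.card_fin,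
    smul_eq_mul] at hsum
  omega

theorem vertexList_perm (hR : TwoRegular R) {k : ℕ} (hk : k < n) :
    (vertexList R k).Perm (vertexList R (k + 1) ++ [(R ⟨k, hk⟩).fst, (R ⟨k, hk⟩).snd]) := by
  rw [← Multiset.coe_eq_coe, ← Multiset.coe_add, vertexList, vertexList, Multiset.sort_eq,
    Multiset.sort_eq]
  ext v
  have hle := degAt_le_two R hR (k + 1) v
  rw [degAt_succ R hk v] at hle
  simp only [Multiset.count_sum', Multiset.count_replicate, Multiset.count_add,
    Multiset.coe_count, List.count_cons, List.count_nil, beq_iff_eq, Finset.sum_ite_eq',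
    Finset.mem_univ, if_true, degAt_succ R hk v]
  split_ifs at hle ⊢ <;> omega

variable (σ : Fin n → Fin n)

theorem freeAt_succ {k : ℕ} (hk : k < n) :
    freeAt R σ (k + 1) = (freeAt R σ k).erase (σ ⟨k, hk⟩) := by
  rw [freeAt, Fin.filter_val_lt_succ hk, Finset.image_insert, Finset.sdiff_insert, freeAt]

theorem card_freeAt {k : ℕ} (hk : k ≤ n) (hinj : Set.InjOn σ {i | i.1 < k}) :
    (freeAt R σ k).card = n - k := by
  rw [freeAt, Finset.card_sdiff_of_subset (Finset.subset_univ _),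
    Finset.card_image_of_injOn (by simpa using hinj)]
  simp [Fin.card_filter_val_lt, hk]

theorem sortedLE_slotList (k : ℕ) : (slotList R σ k).SortedLE :=
  (Multiset.pairwise_sort _ _).sortedLE

theorem length_slotList {k : ℕ} (hk : k ≤ n) (hinj : Set.InjOn σ {i | i.1 < k}) :
    (slotList R σ k).length = 2 * (n - k) := by
  simp [slotList, card_freeAt R σ hk hinj, mul_comm]

theorem slotList_perm {k : ℕ} (hk : k < n) (hfree : σ ⟨k, hk⟩ ∈ freeAt R σ k) :
    (slotList R σ k).Perm (slotList R σ (k + 1) ++ [σ ⟨k, hk⟩, σ ⟨k, hk⟩]) := by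
  rw [← Multiset.coe_eq_coe, ← Multiset.coe_add, slotList, slotList, Multiset.sort_eq,
    Multiset.sort_eq, freeAt_succ R σ hk, ← Finset.sum_erase_add _ _ hfree]
  rfl

end PartialState

theorem arrows_shift_local_general {n : ℕ} (R : Fin n → Request n) (hR : TwoRegular R)
    (σ : Fin n → Fin n) (k : ℕ) (hk : k < n)
    (hinj : ∀ i j : Fin n, i.1 < k + 1 → j.1 < k + 1 → σ i = σ j → i = j)
    (hfree : σ ⟨k, hk⟩ ∈ freeAt R σ k)
    (y₁ y₂ : Fin n) (hy : y₁ ≤ y₂)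
    (hall : ∀ p ∈ arrows R σ k, p.2 = σ ⟨k, hk⟩ → p.1 = y₁ ∨ p.1 = y₂)
    (w : Fin n)
    (hw : w < min (R ⟨k, hk⟩).fst y₁ ∨ max (R ⟨k, hk⟩).snd y₂ < w) :
    ((arrows R σ k).filter (fun p => p.1 = w)).map Prod.snd =
      ((arrows R σ (k + 1)).filter (fun p => p.1 = w)).map Prod.snd := by
  obtain ⟨P, S, hB', hB⟩ := List.exists_eq_append_cons_cons_of_perm
    (sortedLE_slotList R σ k) (sortedLE_slotList R σ (k + 1)) (slotList_perm R σ hk hfree)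
  have hinjOn : Set.InjOn σ {i | i.1 < k} := fun i hi j hj =>
    hinj i j (Nat.lt_succ_of_lt hi) (Nat.lt_succ_of_lt hj)
  have hlen : (vertexList R k).length = (P ++ σ ⟨k, hk⟩ :: σ ⟨k, hk⟩ :: S).length := by
    rw [← hB, length_vertexList R hR hk.le, length_slotList R σ hk.le hinjOn]
  rw [arrows, hB] at hall ⊢
  rw [arrows, hB']
  exact List.map_snd_filter_zip_fst_eq_of_lt_min_or_max_lt (sortedLE_vertexList R k)
    (sortedLE_vertexList R (k + 1)) (vertexList_perm R hR hk) (R ⟨k, hk⟩).lt.le hy hlen hall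
    hw

/-- Shifting of propagation arrows: if the `(k+1)`-st request `R_k = {x₁,x₂}` of a
2-regular instance is assigned to the free slot `s_x = σ ⟨k,hk⟩`, and `y₁ ≤ y₂` are
the vertices whose propagation arrows pointed to `s_x` before the assignment, then
every vertex outside the closed interval `[min x₁ y₁, max x₂ y₂]` has exactly the
same propagation-arrow targets before and after the assignment. -/
theorem arrows_shift_local {n : ℕ} (R : Fin n → Request n) (hR : TwoRegular R)
    (σ : Fin n → Fin n) (k : ℕ) (hk : k < n)
    (hinj : ∀ i j : Fin n, i.1 < k + 1 → j.1 < k + 1 → σ i = σ j → i = j)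
    (hfree : σ ⟨k, hk⟩ ∈ freeAt R σ k)
    (y₁ y₂ : Fin n) (hy : y₁ ≤ y₂)
    (hy₁ : (y₁, σ ⟨k, hk⟩) ∈ arrows R σ k)
    (hy₂ : (y₂, σ ⟨k, hk⟩) ∈ arrows R σ k)
    (hall : ∀ p ∈ arrows R σ k, p.2 = σ ⟨k, hk⟩ → p.1 = y₁ ∨ p.1 = y₂)
    (w : Fin n)
    (hw : w < min (R ⟨k, hk⟩).fst y₁ ∨ max (R ⟨k, hk⟩).snd y₂ < w) :
    ((arrows R σ k).filter (fun p => p.1 = w)).map Prod.snd =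
      ((arrows R σ (k + 1)).filter (fun p => p.1 = w)).map Prod.snd :=
  arrows_shift_local_general R hR σ k hk hinj hfree y₁ y₂ hy hall w hw
end

section
/- In any run of the greedy algorithm on a 2-regular instance, suppose the assignment of an arriving request creates a 4-0 crossing on a pair of requests (R_x, R_y), while at the time of the placement some free slot existed whose choice would not have created any 4-0 crossing (a non-forced 4-0 crossing). Then there are at least two unavoidable crossings identifiable with this pair: the sum over all requests R' of the instance distinct from R_x and R_y of mincross(R',R_x) + mincross(R',R_y) is at least 2. -/
/-!
In a 2-regular instance the endpoints lying at or left of a vertex `v` number `2 · #{u ≤ v}`,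
so an even number of requests straddle `v`, i.e. have exactly one endpoint at or left of it.
A request `r = {x₁, x₂}` straddles `x₁`, hence so does some other request; its interval
overlaps `[x₁, x₂]`, so it crosses `r` whichever of the two gets the smaller slot. For a 4-0
pair `x₁ < x₂ < y₁ < y₂` the requests found this way at `x₁` and at `y₁` differ from both
members of the pair, which gives the two unavoidable crossings.
-/

open Finset

namespace Request

variable {n : ℕ}

def Straddles (r : Request n) (v : Fin n) : Prop :=
  r.fst ≤ v ∧ v < r.snd

instance (r : Request n) (v : Fin n) : Decidable (r.Straddles v) :=
  inferInstanceAs (Decidable (_ ∧ _))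

theorem straddles_fst (r : Request n) : r.Straddles r.fst :=
  ⟨le_rfl, r.lt⟩

theorem not_straddles_fst_of_separated {r r' : Request n}
    (h : r.snd < r'.fst ∨ r'.snd < r.fst) : ¬ r'.Straddles r.fst := by
  rintro ⟨h₁, h₂⟩
  have := r.lt
  rcases h with h | h <;> order

theorem one_le_mincross {r r' : Request n} (h₁ : r'.fst < r.snd) (h₂ : r.fst < r'.snd) :
    1 ≤ mincross r r' := by
  unfold mincross crossLower
  simp only [le_min_iff, h₁, h₂, if_true]
  omega

theorem Straddles.one_le_mincross {r r' : Request n} (h : r'.Straddles r.fst) :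
    1 ≤ mincross r' r :=
  Request.one_le_mincross h.2 (h.1.trans_lt r.lt)

end Request

namespace TwoRegular

variable {n : ℕ} {R : Fin n → Request n}

theorem sum_endpoints_mem (hR : TwoRegular R) (S : Finset (Fin n)) :
    ∑ j, ((if (R j).fst ∈ S then 1 else 0) + (if (R j).snd ∈ S then 1 else 0)) = 2 * #S := by
  have hcount : ∀ j, ((if (R j).fst ∈ S then 1 else 0) + (if (R j).snd ∈ S then 1 else 0) : ℕ) =
      ∑ v ∈ S, ((if (R j).fst = v then 1 else 0) + (if (R j).snd = v then 1 else 0)) := by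
    intro j
    simp [sum_add_distrib, sum_ite_eq]
  simp_rw [hcount]
  rw [sum_comm, sum_congr rfl fun v _ => hR v, sum_const, smul_eq_mul, mul_comm]

theorem even_card_straddles (hR : TwoRegular R) (v : Fin n) :
    Even #{j | (R j).Straddles v} := by
  have hsplit : ∀ j, ((if (R j).fst ∈ Iic v then 1 else 0) +
      (if (R j).snd ∈ Iic v then 1 else 0) : ℕ) =
      (if (R j).Straddles v then 1 else 0) + 2 * (if (R j).snd ≤ v then 1 else 0) := by
    intro j
    by_cases h₂ : (R j).snd ≤ v
    · simp [Request.Straddles, h₂, ((R j).lt.trans_le h₂).le]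
    · by_cases h₁ : (R j).fst ≤ v <;> simp [Request.Straddles, h₁, h₂]
  have hsum := hR.sum_endpoints_mem (Iic v)
  simp only [hsplit, sum_add_distrib, ← mul_sum, sum_boole, Nat.cast_id] at hsum
  exact ⟨#(Iic v) - #{j | (R j).snd ≤ v}, by omega⟩

theorem exists_ne_straddles_fst (hR : TwoRegular R) (a : Fin n) :
    ∃ j ≠ a, (R j).Straddles (R a).fst := by
  have ha : a ∈ ({j | (R j).Straddles (R a).fst} : Finset (Fin n)) := by
    simpa using (R a).straddles_fst
  obtain ⟨m, hm⟩ := hR.even_card_straddles (R a).fst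
  have hcard : 1 < #{j | (R j).Straddles (R a).fst} := by
    have := card_pos.mpr ⟨a, ha⟩
    omega
  obtain ⟨j, hj, hja⟩ := exists_mem_ne hcard a
  exact ⟨j, hja, (mem_filter.mp hj).2⟩

theorem two_le_sum_mincross_of_separated (hR : TwoRegular R) {a b : Fin n}
    (h : (R a).snd < (R b).fst ∨ (R b).snd < (R a).fst) :
    2 ≤ ∑ j ∈ univ.filter (fun j => j ≠ a ∧ j ≠ b),
        (mincross (R j) (R a) + mincross (R j) (R b)) := by
  obtain ⟨ja, hja, hsa⟩ := hR.exists_ne_straddles_fst a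
  obtain ⟨jb, hjb, hsb⟩ := hR.exists_ne_straddles_fst b
  have hjab : ja ≠ b := by
    rintro rfl
    exact Request.not_straddles_fst_of_separated h hsa
  have hjba : jb ≠ a := by
    rintro rfl
    exact Request.not_straddles_fst_of_separated h.symm hsb
  have hle (f : Fin n → ℕ) {j} (hj : j ≠ a ∧ j ≠ b) :
      f j ≤ ∑ j ∈ univ.filter (fun j => j ≠ a ∧ j ≠ b), f j :=
    single_le_sum (fun _ _ => Nat.zero_le _) (by simpa using hj)
  calc 2 ≤ mincross (R ja) (R a) + mincross (R jb) (R b) :=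
        add_le_add hsa.one_le_mincross hsb.one_le_mincross
    _ ≤ _ := by
        rw [sum_add_distrib]
        exact add_le_add (hle (fun j => mincross (R j) (R a)) ⟨hja, hjab⟩)
          (hle (fun j => mincross (R j) (R b)) ⟨hjba, hjb⟩)

end TwoRegular

theorem nonforced_40_two_unavoidable_general {n : ℕ} (R : Fin n → Request n)
    (hR : TwoRegular R) (σ : Equiv.Perm (Fin n))
    (k i : Fin n)
    (h40 : ((R i).snd < (R k).fst ∧ σ k < σ i) ∨ ((R k).snd < (R i).fst ∧ σ i < σ k)) :
    2 ≤ ∑ j ∈ Finset.univ.filter (fun j : Fin n => j ≠ i ∧ j ≠ k),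
        (mincross (R j) (R i) + mincross (R j) (R k)) :=
  hR.two_le_sum_mincross_of_separated (h40.imp And.left And.left)

/-- Non-forced 4-0 crossings come with two unavoidable crossings: if the assignment
of the arriving request `R k` creates a 4-0 crossing with a previously assigned
request `R i` although some free slot would have created no 4-0 crossing, then the
number of unavoidable crossings between other requests and the pair `(R i, R k)`
is at least `2`. -/
theorem nonforced_40_two_unavoidable {n : ℕ} (R : Fin n → Request n)
    (hR : TwoRegular R) (σ : Equiv.Perm (Fin n)) (hσ : GreedyRun R σ)
    (k i : Fin n) (hik : i.1 < k.1)
    (h40 : ((R i).snd < (R k).fst ∧ σ k < σ i) ∨ ((R k).snd < (R i).fst ∧ σ i < σ k))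
    (hnonforced : ∃ s ∈ freeAt R ⇑σ k.1, ∀ i' : Fin n, i'.1 < k.1 →
      ¬ (((R i').snd < (R k).fst ∧ s < σ i') ∨ ((R k).snd < (R i').fst ∧ σ i' < s))) :
    2 ≤ ∑ j ∈ Finset.univ.filter (fun j : Fin n => j ≠ i ∧ j ≠ k),
        (mincross (R j) (R i) + mincross (R j) (R k)) :=
  nonforced_40_two_unavoidable_general R hR σ k i h40
end
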